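/- arXiv:math/0009023 — 5 statements merged into one kernel-verified Lean document; each statement's English description precedes it below -/
import Mathlib

section
/- Let q ∈ (-1,1), c ∈ ℝ, and let (H_n) be the q-Hermite polynomials. Suppose E is a bilinear functional on polynomials satisfying E(H_n, H_m) = c^n·[n]_q!·δ_{nm}. Then E(x·H_n(x), x·H_m(x)) equals c^{n+1}·[n+2]_q! if m = n+2, c^{n-1}·[n]_q! if m = n-2, c^{n-1}·([n+1]_q·c² + [n]_q)·[n]_q! if m = n, and 0 otherwise. -/
/-!
Expanding `X * H k = H (k + 1) + [k]_q H (k - 1)` in both arguments leaves four values of `E` on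
the orthogonal family, at most two of them nonzero. This works for any orthogonal family with a
three-term recurrence; the q-Hermite case has weights `c ^ k * [k]_q!`.
-/

open Polynomial

/-- The q-integer `[n]_q = (1-q^n)/(1-q)`. -/
noncomputable def qInt (q : ℝ) (n : ℕ) : ℝ := (1 - q ^ n) / (1 - q)

/-- The q-factorial `[n]_q! = [1]_q ⋯ [n]_q`. -/
noncomputable def qFact (q : ℝ) (n : ℕ) : ℝ := ∏ k ∈ Finset.Icc 1 n, qInt q k

lemma qInt_zero (q : ℝ) : qInt q 0 = 0 := by simp [qInt]

lemma qFact_succ (q : ℝ) (n : ℕ) : qFact q (n + 1) = qInt q (n + 1) * qFact q n := by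
  rw [qFact, Finset.prod_Icc_succ_top (by omega), mul_comm]; rfl

section ThreeTermRecurrence

variable {R : Type*} [CommRing R]

/-- `b 0 = 0` makes the case `k = 0` hold whatever `H (0 - 1) = H 0` is. -/
lemma X_mul_eq_of_threeTerm (H : ℕ → R[X]) (b : ℕ → R) (hb0 : b 0 = 0)
    (hH0 : H 0 = 1) (hH1 : H 1 = X) (hrec : ∀ n, X * H (n + 1) = H (n + 2) + C (b (n + 1)) * H n)
    (k : ℕ) : X * H k = H (k + 1) + C (b k) * H (k - 1) := by
  cases k with
  | zero => simp [hH0, hH1, hb0]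
  | succ k => simpa using hrec k

lemma bilinear_add_smul_add_smul {M : Type*} [AddCommGroup M] [Module R M]
    (E : M →ₗ[R] M →ₗ[R] R) (x y x' y' : M) (r s : R) :
    E (x + r • y) (x' + s • y') = E x x' + s * E x y' + r * E y x' + r * s * E y y' := by
  simp only [map_add, map_smul, LinearMap.add_apply, LinearMap.smul_apply, smul_eq_mul]
  ring

theorem bilinear_X_mul_of_threeTerm (H : ℕ → R[X]) (b w : ℕ → R) (hb0 : b 0 = 0)
    (hH0 : H 0 = 1) (hH1 : H 1 = X) (hrec : ∀ n, X * H (n + 1) = H (n + 2) + C (b (n + 1)) * H n)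
    (E : R[X] →ₗ[R] R[X] →ₗ[R] R) (hE : ∀ n m, E (H n) (H m) = if n = m then w n else 0)
    (n m : ℕ) :
    E (X * H n) (X * H m) =
      if m = n + 2 then b (n + 2) * w (n + 1)
      else if m + 2 = n then b n * w (n - 1)
      else if m = n then w (n + 1) + b n ^ 2 * w (n - 1)
      else 0 := by
  have hX := X_mul_eq_of_threeTerm H b hb0 hH0 hH1 hrec
  have expand : E (X * H n) (X * H m) = E (H (n + 1)) (H (m + 1)) + b m * E (H (n + 1)) (H (m - 1))
      + b n * E (H (n - 1)) (H (m + 1)) + b n * b m * E (H (n - 1)) (H (m - 1)) := by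
    rw [hX n, hX m, ← smul_eq_C_mul, ← smul_eq_C_mul, bilinear_add_smul_add_smul]
  rw [expand, hE, hE, hE, hE]
  rcases n with _ | n <;> rcases m with _ | m <;> simp [hb0] <;>
    split_ifs <;> first | omega | (subst_vars; ring1)

end ThreeTermRecurrence

lemma zpow_natCast_sub_one_mul_sq {K : Type*} [GroupWithZero K] (c : K) (n : ℕ) :
    c ^ ((n : ℤ) - 1) * c ^ 2 = c ^ (n + 1) := by
  rcases eq_or_ne c 0 with rfl | hc
  · simp
  · rw [← zpow_natCast, ← zpow_natCast, ← zpow_add₀ hc]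
    congr 1
    push_cast
    ring

lemma zpow_natCast_sub_one_of_pos {K : Type*} [GroupWithZero K] (c : K) {n : ℕ} (hn : 0 < n) :
    c ^ ((n : ℤ) - 1) = c ^ (n - 1) := by
  rw [← Nat.cast_one, ← Nat.cast_sub hn, zpow_natCast]

lemma qHermite_diag (q c : ℝ) (n : ℕ) :
    c ^ (n + 1) * qFact q (n + 1) + qInt q n ^ 2 * (c ^ (n - 1) * qFact q (n - 1)) =
      c ^ ((n : ℤ) - 1) * (qInt q (n + 1) * c ^ 2 + qInt q n) * qFact q n := by
  have lower : qInt q n ^ 2 * (c ^ (n - 1) * qFact q (n - 1)) =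
      c ^ ((n : ℤ) - 1) * qInt q n * qFact q n := by
    rcases n with _ | n
    · simp [qInt_zero]
    · rw [zpow_natCast_sub_one_of_pos c n.succ_pos, qFact_succ, Nat.add_sub_cancel]
      ring
  rw [lower, qFact_succ, ← zpow_natCast_sub_one_mul_sq c n]
  ring

theorem bilinear_x_qHermite_general (q : ℝ) (c : ℝ)
    (H : ℕ → Polynomial ℝ)
    (hH0 : H 0 = 1) (hH1 : H 1 = X)
    (hrec : ∀ n, X * H (n + 1) = H (n + 2) + C (qInt q (n + 1)) * H n)
    (E : Polynomial ℝ →ₗ[ℝ] Polynomial ℝ →ₗ[ℝ] ℝ)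
    (hE : ∀ n m, E (H n) (H m) = if n = m then c ^ n * qFact q n else 0)
    (n m : ℕ) :
    E (X * H n) (X * H m) =
      if m = n + 2 then c ^ (n + 1) * qFact q (n + 2)
      else if m + 2 = n then c ^ ((n : ℤ) - 1) * qFact q n
      else if m = n then c ^ ((n : ℤ) - 1) * (qInt q (n + 1) * c ^ 2 + qInt q n) * qFact q n
      else 0 := by
  rw [bilinear_X_mul_of_threeTerm H (qInt q) (fun k => c ^ k * qFact q k) (qInt_zero q)
    hH0 hH1 hrec E hE n m]
  split_ifs with _ h₂
  · rw [qFact_succ q (n + 1)]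
    ring
  · subst h₂
    rw [zpow_natCast_sub_one_of_pos c (by omega), qFact_succ q (m + 1)]
    exact mul_left_comm _ _ _
  · exact qHermite_diag q c n
  · rfl

/-- Values of a bilinear functional `E` with `E(H_n, H_m) = c^n [n]_q! δ_{nm}`
on the pairs `(x·H_n, x·H_m)`. -/
theorem bilinear_x_qHermite (q : ℝ) (hq : -1 < q) (hq' : q < 1) (c : ℝ)
    (H : ℕ → Polynomial ℝ)
    (hH0 : H 0 = 1) (hH1 : H 1 = X)
    (hrec : ∀ n, X * H (n + 1) = H (n + 2) + C (qInt q (n + 1)) * H n)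
    (E : Polynomial ℝ →ₗ[ℝ] Polynomial ℝ →ₗ[ℝ] ℝ)
    (hE : ∀ n m, E (H n) (H m) = if n = m then c ^ n * qFact q n else 0)
    (n m : ℕ) :
    E (X * H n) (X * H m) =
      if m = n + 2 then c ^ (n + 1) * qFact q (n + 2)
      else if m + 2 = n then c ^ ((n : ℤ) - 1) * qFact q n
      else if m = n then c ^ ((n : ℤ) - 1) * (qInt q (n + 1) * c ^ 2 + qInt q n) * qFact q n
      else 0 :=
  bilinear_x_qHermite_general q c H hH0 hH1 hrec E hE n m
end

section
/- Let q ∈ (-1,1), r ∈ (-1,1), and a, b ∈ ℝ. Define A = (ab(1-q)r + a²(1-qr²))/(1-qr²), B = (ab(1+q)(1-r²))/(1-qr²), C = (ab(1-q)r + b²(1-qr²))/(1-qr²). Then A, B, C is the unique solution of the linear system: A·r² + B·r + C = a²r² + 2abr + b²; A + B·r + C·r² = a² + 2abr + b²r²; (1+q)r(A+C) + B(qr²+1) = (1+q)((a²+b²)r + ab(r²+1)). -/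
/-!
The system is linear in `(A, B, C)`, so it suffices to check that the given triple solves it and
that the homogeneous system has only the trivial solution. Subtracting the first two equations
forces `A = C` (as `r ^ 2 ≠ 1`); what remains is a `2 × 2` system in `(A, B)` with determinant
`(r ^ 2 + 1) (q r ^ 2 + 1) - 2 (1 + q) r ^ 2 = (1 - r ^ 2) (1 - q r ^ 2)`, which is nonzero.
-/

lemma one_sub_mul_sq_pos {q r : ℝ} (hq : q < 1) (hr : r ^ 2 < 1) : 0 < 1 - q * r ^ 2 := by
  rcases le_or_gt q 0 with hq0 | hq0
  · nlinarith [sq_nonneg r]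
  · nlinarith

lemma eq_zero_of_quadVar_homogeneous {q r x y z : ℝ} (hr : 1 - r ^ 2 ≠ 0)
    (hqr : 1 - q * r ^ 2 ≠ 0)
    (h₁ : x * r ^ 2 + y * r + z = 0) (h₂ : x + y * r + z * r ^ 2 = 0)
    (h₃ : (1 + q) * r * (x + z) + y * (q * r ^ 2 + 1) = 0) :
    x = 0 ∧ y = 0 ∧ z = 0 := by
  have hdet : (1 - r ^ 2) * (1 - q * r ^ 2) ≠ 0 := mul_ne_zero hr hqr
  have hxz : x = z := by
    have h : (x - z) * (1 - r ^ 2) = 0 := by linear_combination h₂ - h₁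
    linear_combination (mul_eq_zero.1 h).resolve_right hr
  subst hxz
  have hx : x = 0 := by
    have h : x * ((1 - r ^ 2) * (1 - q * r ^ 2)) = 0 := by
      linear_combination (q * r ^ 2 + 1) * h₂ - r * h₃
    exact (mul_eq_zero.1 h).resolve_right hdet
  subst hx
  have hy : y = 0 := by
    have h : y * ((1 - r ^ 2) * (1 - q * r ^ 2)) = 0 := by
      linear_combination (r ^ 2 + 1) * h₃ - 2 * (1 + q) * r * h₂
    exact (mul_eq_zero.1 h).resolve_right hdet
  exact ⟨rfl, hy, rfl⟩

theorem ABC_unique_solution_general (q r a b : ℝ) (hq' : q < 1)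
    (hr : -1 < r) (hr' : r < 1)
    (A B C : ℝ)
    (hA : A = (a * b * (1 - q) * r + a ^ 2 * (1 - q * r ^ 2)) / (1 - q * r ^ 2))
    (hB : B = (a * b * (1 + q) * (1 - r ^ 2)) / (1 - q * r ^ 2))
    (hC : C = (a * b * (1 - q) * r + b ^ 2 * (1 - q * r ^ 2)) / (1 - q * r ^ 2)) :
    (A * r ^ 2 + B * r + C = a ^ 2 * r ^ 2 + 2 * a * b * r + b ^ 2 ∧
     A + B * r + C * r ^ 2 = a ^ 2 + 2 * a * b * r + b ^ 2 * r ^ 2 ∧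
     (1 + q) * r * (A + C) + B * (q * r ^ 2 + 1) =
       (1 + q) * ((a ^ 2 + b ^ 2) * r + a * b * (r ^ 2 + 1))) ∧
    (∀ A' B' C' : ℝ,
      (A' * r ^ 2 + B' * r + C' = a ^ 2 * r ^ 2 + 2 * a * b * r + b ^ 2 ∧
       A' + B' * r + C' * r ^ 2 = a ^ 2 + 2 * a * b * r + b ^ 2 * r ^ 2 ∧
       (1 + q) * r * (A' + C') + B' * (q * r ^ 2 + 1) =
         (1 + q) * ((a ^ 2 + b ^ 2) * r + a * b * (r ^ 2 + 1))) →
      A' = A ∧ B' = B ∧ C' = C) := by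
  have hr2 : r ^ 2 < 1 := sq_lt_one_iff_abs_lt_one r |>.2 (abs_lt.2 ⟨hr, hr'⟩)
  have hqr : 1 - q * r ^ 2 ≠ 0 := (one_sub_mul_sq_pos hq' hr2).ne'
  have hsol₁ : A * r ^ 2 + B * r + C = a ^ 2 * r ^ 2 + 2 * a * b * r + b ^ 2 := by
    subst hA hB hC; field_simp; ring
  have hsol₂ : A + B * r + C * r ^ 2 = a ^ 2 + 2 * a * b * r + b ^ 2 * r ^ 2 := by
    subst hA hB hC; field_simp; ring
  have hsol₃ : (1 + q) * r * (A + C) + B * (q * r ^ 2 + 1) =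
      (1 + q) * ((a ^ 2 + b ^ 2) * r + a * b * (r ^ 2 + 1)) := by
    subst hA hB hC; field_simp; ring
  refine ⟨⟨hsol₁, hsol₂, hsol₃⟩, fun A' B' C' ⟨h₁, h₂, h₃⟩ => ?_⟩
  obtain ⟨hA', hB', hC'⟩ := eq_zero_of_quadVar_homogeneous (x := A' - A) (y := B' - B)
    (z := C' - C) (sub_pos.2 hr2).ne' hqr (by linear_combination h₁ - hsol₁)
    (by linear_combination h₂ - hsol₂) (by linear_combination h₃ - hsol₃)
  exact ⟨sub_eq_zero.1 hA', sub_eq_zero.1 hB', sub_eq_zero.1 hC'⟩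

/-- The coefficients `A, B, C` of the quadratic conditional variance are the
unique solution of the linear system arising from the cases `m = n+2`,
`m = n-2`, `m = n`. -/
theorem ABC_unique_solution (q r a b : ℝ) (hq : -1 < q) (hq' : q < 1)
    (hr : -1 < r) (hr' : r < 1)
    (A B C : ℝ)
    (hA : A = (a * b * (1 - q) * r + a ^ 2 * (1 - q * r ^ 2)) / (1 - q * r ^ 2))
    (hB : B = (a * b * (1 + q) * (1 - r ^ 2)) / (1 - q * r ^ 2))
    (hC : C = (a * b * (1 - q) * r + b ^ 2 * (1 - q * r ^ 2)) / (1 - q * r ^ 2)) :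
    (A * r ^ 2 + B * r + C = a ^ 2 * r ^ 2 + 2 * a * b * r + b ^ 2 ∧
     A + B * r + C * r ^ 2 = a ^ 2 + 2 * a * b * r + b ^ 2 * r ^ 2 ∧
     (1 + q) * r * (A + C) + B * (q * r ^ 2 + 1) =
       (1 + q) * ((a ^ 2 + b ^ 2) * r + a * b * (r ^ 2 + 1))) ∧
    (∀ A' B' C' : ℝ,
      (A' * r ^ 2 + B' * r + C' = a ^ 2 * r ^ 2 + 2 * a * b * r + b ^ 2 ∧
       A' + B' * r + C' * r ^ 2 = a ^ 2 + 2 * a * b * r + b ^ 2 * r ^ 2 ∧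
       (1 + q) * r * (A' + C') + B' * (q * r ^ 2 + 1) =
         (1 + q) * ((a ^ 2 + b ^ 2) * r + a * b * (r ^ 2 + 1))) →
      A' = A ∧ B' = B ∧ C' = C) :=
  ABC_unique_solution_general q r a b hq' hr hr' A B C hA hB hC
end

section
/- Let q ∈ (-1,1), and let u, v, w ∈ ℝ (representing ⟨f,g⟩, ⟨g,h⟩, ⟨f,h⟩) with 0 < w < 1, and set a = (u - vw)/(1-w²), b = (v - uw)/(1-w²). Then the following identity holds: (1-qw²)(1-w)² · V = (1-w)²·(1-qw² + (1+q)·w·u·v) - (u-v)²·(1+w²), where V = 1 - a² - b² - ab·w·((1+q)(1-w²)+2(1-q))/(1-qw²) - (ab(1-q)/(1-qw²))·(w·s - t)·(w·t - s) evaluated at s = √2/√(1-q), t = -√2/√(1-q). -/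
/-!
At the boundary point `t = -s` with `(1 - q) s² = 2`, the last term of `V` equals
`2ab(1 + w)² / (1 - qw²)`; it combines with the preceding term because
`2(1 + w)² - w((1 + q)(1 - w²) + 2(1 - q)) = (1 + w²)(2 + (1 + q)w)`.
What remains is a rational identity in `u, v, w, q` whose only denominators are powers of `1 ± w`.
-/

/-- The quantity `V` of the paper, as a function of the point `(s, t)`. -/
noncomputable def condVariance (q w a b s t : ℝ) : ℝ :=
  1 - a ^ 2 - b ^ 2
    - a * b * w * ((1 + q) * (1 - w ^ 2) + 2 * (1 - q)) / (1 - q * w ^ 2)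
    - (a * b * (1 - q) / (1 - q * w ^ 2)) * (w * s - t) * (w * t - s)

lemma mul_sq_lt_one {q w : ℝ} (hq : q < 1) (hw : w ^ 2 ≤ 1) : q * w ^ 2 < 1 := by
  rcases le_or_gt q 0 with hq0 | hq0
  · nlinarith [sq_nonneg w]
  · nlinarith

lemma mul_sq_sqrt_div_sqrt {c x : ℝ} (hc : 0 < c) (hx : 0 ≤ x) :
    c * (Real.sqrt x / Real.sqrt c) ^ 2 = x := by
  rw [div_pow, Real.sq_sqrt hx, Real.sq_sqrt hc.le]
  field_simp

lemma mul_condVariance_neg {q w a b s : ℝ} (hqw : 1 - q * w ^ 2 ≠ 0) (hs : (1 - q) * s ^ 2 = 2) :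
    (1 - q * w ^ 2) * condVariance q w a b s (-s) =
      (1 - q * w ^ 2) * (1 - a ^ 2 - b ^ 2) + a * b * (1 + w ^ 2) * (2 + (1 + q) * w) := by
  unfold condVariance
  field_simp
  linear_combination a * b * (1 + w) ^ 2 * hs

lemma one_sub_sq_mul_boundary_eq {q u v w a b : ℝ} (hw : 1 - w ^ 2 ≠ 0)
    (ha : a = (u - v * w) / (1 - w ^ 2)) (hb : b = (v - u * w) / (1 - w ^ 2)) :
    (1 - w) ^ 2 * ((1 - q * w ^ 2) * (1 - a ^ 2 - b ^ 2) + a * b * (1 + w ^ 2) * (2 + (1 + q) * w)) =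
      (1 - w) ^ 2 * (1 - q * w ^ 2 + (1 + q) * w * u * v) - (u - v) ^ 2 * (1 + w ^ 2) := by
  subst ha hb
  field_simp
  ring

theorem bell_key_identity_general (q u v w : ℝ) (hq' : q < 1)
    (hw : 0 < w) (hw' : w < 1)
    (a b s t V : ℝ)
    (ha : a = (u - v * w) / (1 - w ^ 2))
    (hb : b = (v - u * w) / (1 - w ^ 2))
    (hs : s = Real.sqrt 2 / Real.sqrt (1 - q))
    (ht : t = -(Real.sqrt 2 / Real.sqrt (1 - q)))
    (hV : V = 1 - a ^ 2 - b ^ 2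
        - a * b * w * ((1 + q) * (1 - w ^ 2) + 2 * (1 - q)) / (1 - q * w ^ 2)
        - (a * b * (1 - q) / (1 - q * w ^ 2)) * (w * s - t) * (w * t - s)) :
    (1 - q * w ^ 2) * (1 - w) ^ 2 * V =
      (1 - w) ^ 2 * (1 - q * w ^ 2 + (1 + q) * w * u * v)
        - (u - v) ^ 2 * (1 + w ^ 2) := by
  have hw2 : 1 - w ^ 2 ≠ 0 := by nlinarith
  have hqw : 1 - q * w ^ 2 ≠ 0 := (sub_pos.2 (mul_sq_lt_one hq' (by nlinarith))).ne'
  have hs2 : (1 - q) * s ^ 2 = 2 := hs ▸ mul_sq_sqrt_div_sqrt (sub_pos.2 hq') zero_le_two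
  have hVs : V = condVariance q w a b s (-s) := by rw [hV, ht, ← hs]; rfl
  calc (1 - q * w ^ 2) * (1 - w) ^ 2 * V
      = (1 - w) ^ 2 * ((1 - q * w ^ 2) * condVariance q w a b s (-s)) := by rw [hVs]; ring
    _ = _ := by rw [mul_condVariance_neg hqw hs2, one_sub_sq_mul_boundary_eq hw2 ha hb]

/-- The key algebraic identity (formula (foo2)): the conditional variance
evaluated at the boundary point `s = √2/√(1-q)`, `t = -√2/√(1-q)`. -/
theorem bell_key_identity (q u v w : ℝ) (hq : -1 < q) (hq' : q < 1)
    (hw : 0 < w) (hw' : w < 1)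
    (a b s t V : ℝ)
    (ha : a = (u - v * w) / (1 - w ^ 2))
    (hb : b = (v - u * w) / (1 - w ^ 2))
    (hs : s = Real.sqrt 2 / Real.sqrt (1 - q))
    (ht : t = -(Real.sqrt 2 / Real.sqrt (1 - q)))
    (hV : V = 1 - a ^ 2 - b ^ 2
        - a * b * w * ((1 + q) * (1 - w ^ 2) + 2 * (1 - q)) / (1 - q * w ^ 2)
        - (a * b * (1 - q) / (1 - q * w ^ 2)) * (w * s - t) * (w * t - s)) :
    (1 - q * w ^ 2) * (1 - w) ^ 2 * V =
      (1 - w) ^ 2 * (1 - q * w ^ 2 + (1 + q) * w * u * v)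
        - (u - v) ^ 2 * (1 + w ^ 2) :=
  bell_key_identity_general q u v w hq' hw hw' a b s t V ha hb hs ht hV
end

section
/- Let q ∈ [-1,1) and u, v, w ∈ [-1,1] with 0 < w < 1, u·v ≤ w (sub-Markov condition). If (1-w)²·(1-qw² + (1+q)·w·u·v) ≥ (u-v)²·(1+w²), then 1 - w ≥ |u - v|. -/
lemma one_sub_mul_sq_add_mul_le_one_add_sq {q u v w : ℝ} (hq : 0 ≤ 1 + q) (hw : 0 ≤ w)
    (hsub : u * v ≤ w) : 1 - q * w ^ 2 + (1 + q) * w * u * v ≤ 1 + w ^ 2 := by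
  have : (1 + q) * w * (u * v) ≤ (1 + q) * w * w :=
    mul_le_mul_of_nonneg_left hsub (mul_nonneg hq hw)
  linarith

theorem bell_inequality_from_variance_general (q u v w : ℝ)
    (hq : -1 ≤ q)
    (hw : 0 < w) (hw' : w < 1) (hsub : u * v ≤ w)
    (hvar : (1 - w) ^ 2 * (1 - q * w ^ 2 + (1 + q) * w * u * v) ≥
      (u - v) ^ 2 * (1 + w ^ 2)) :
    1 - w ≥ |u - v| := by
  have hfactor := one_sub_mul_sq_add_mul_le_one_add_sq (neg_le_iff_add_nonneg'.mp hq) hw.le hsub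
  have hsq : (u - v) ^ 2 ≤ (1 - w) ^ 2 := by
    refine le_of_mul_le_mul_right ?_ (by positivity : (0 : ℝ) < 1 + w ^ 2)
    calc (u - v) ^ 2 * (1 + w ^ 2)
        ≤ (1 - w) ^ 2 * (1 - q * w ^ 2 + (1 + q) * w * u * v) := hvar
      _ ≤ (1 - w) ^ 2 * (1 + w ^ 2) := mul_le_mul_of_nonneg_left hfactor (sq_nonneg _)
  exact abs_le_of_sq_le_sq hsq (by linarith)

/-- The extended Bell inequality: non-negativity of the boundary conditional
variance together with the sub-Markov condition implies `1 - w ≥ |u - v|`. -/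
theorem bell_inequality_from_variance (q u v w : ℝ)
    (hq : -1 ≤ q) (hq' : q < 1)
    (hu : -1 ≤ u) (hu' : u ≤ 1) (hv : -1 ≤ v) (hv' : v ≤ 1)
    (hw : 0 < w) (hw' : w < 1) (hsub : u * v ≤ w)
    (hvar : (1 - w) ^ 2 * (1 - q * w ^ 2 + (1 + q) * w * u * v) ≥
      (u - v) ^ 2 * (1 + w ^ 2)) :
    1 - w ≥ |u - v| :=
  bell_inequality_from_variance_general q u v w hq hw hw' hsub hvar
end

section
/- For every w ∈ (0,1), there exists u ∈ ℝ with 2w² - 1 < u < 2w - 1; and for any such u, the matrix [[1,u,w],[u,1,w],[w,w,1]] is positive semidefinite while Bell's inequality 1 - w ≥ |u - w| fails (since 1 + u < 2w). -/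
/-!
Completing the square with `s = x₀ + x₁`, `d = x₀ - x₁`, the quadratic form of
`[[1,u,w],[u,1,w],[w,w,1]]` is `(x₂ + w s)² + ((1 + u)/2 - w²) s² + (1 - u)/2 d²`,
so the matrix is positive semidefinite as soon as `2w² ≤ 1 + u ≤ 2`. On the other hand
`1 + u < 2w` gives `|u - w| ≥ w - u > 1 - w`, violating Bell's inequality; for `0 < w < 1`
the window `2w² - 1 < u < 2w - 1` is nonempty because `w² < w`.
-/

open Matrix

theorem dotProduct_bell_matrix_mulVec (u w : ℝ) (x : Fin 3 → ℝ) :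
    star x ⬝ᵥ (!![1, u, w; u, 1, w; w, w, 1] *ᵥ x) =
      (x 2 + w * (x 0 + x 1)) ^ 2 + ((1 + u) / 2 - w ^ 2) * (x 0 + x 1) ^ 2
        + (1 - u) / 2 * (x 0 - x 1) ^ 2 := by
  simp only [dotProduct, Pi.star_apply, star_trivial, mulVec, of_apply, cons_val',
    cons_val_fin_one, Fin.sum_univ_three, Fin.isValue, cons_val_zero, cons_val_one, cons_val,
    one_mul]
  ring

theorem posSemidef_bell_matrix {u w : ℝ} (hu : u ≤ 1) (huw : 2 * w ^ 2 ≤ 1 + u) :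
    (!![1, u, w; u, 1, w; w, w, 1] : Matrix (Fin 3) (Fin 3) ℝ).PosSemidef := by
  refine posSemidef_iff_dotProduct_mulVec.mpr ⟨?_, fun x => ?_⟩
  · ext i j
    fin_cases i <;> fin_cases j <;> rfl
  · rw [dotProduct_bell_matrix_mulVec]
    have hs : 0 ≤ (1 + u) / 2 - w ^ 2 := by linarith
    have hd : 0 ≤ (1 - u) / 2 := by linarith
    positivity

theorem not_bell_inequality_of_one_add_lt {u w : ℝ} (h : 1 + u < 2 * w) :
    ¬ (1 - w ≥ |u - w|) := by
  have := neg_abs_le (u - w)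
  intro hbell
  linarith

theorem two_mul_sq_sub_one_lt_two_mul_sub_one {w : ℝ} (hw : 0 < w) (hw' : w < 1) :
    2 * w ^ 2 - 1 < 2 * w - 1 := by
  nlinarith

/-- Example 1: for every `w ∈ (0,1)` there is `u` with `2w² - 1 < u < 2w - 1`;
for any such `u` the matrix `[[1,u,w],[u,1,w],[w,w,1]]` is positive
semidefinite while Bell's inequality `1 - w ≥ |u - w|` fails, since `1 + u < 2w`. -/
theorem bell_violating_covariance (w : ℝ) (hw : 0 < w) (hw' : w < 1) :
    (∃ u : ℝ, 2 * w ^ 2 - 1 < u ∧ u < 2 * w - 1) ∧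
    ∀ u : ℝ, 2 * w ^ 2 - 1 < u → u < 2 * w - 1 →
      (!![(1:ℝ), u, w; u, 1, w; w, w, 1]).PosSemidef ∧
      1 + u < 2 * w ∧ ¬ (1 - w ≥ |u - w|) := by
  refine ⟨exists_between (two_mul_sq_sub_one_lt_two_mul_sub_one hw hw'), fun u hu hu' => ?_⟩
  have hviolation : 1 + u < 2 * w := by linarith
  exact ⟨posSemidef_bell_matrix (by linarith) (by linarith), hviolation,
    not_bell_inequality_of_one_add_lt hviolation⟩
end
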